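/- Let G be a pomonoid, C a symmetric monoidal category, and T a centralisable strong G-graded monad on C with terminal graded central cones (Z^z X, ι^z_X). For every z ∈ Z(G) and every morphism f : X → Y in C, there exists a unique morphism Z^z f : Z^z X → Z^z Y such that ι^z_Y ∘ Z^z f = T^z(f) ∘ ι^z_X; moreover, this assignment makes Z^z an endofunctor of C (preserving identities and composition) and makes ι^z : Z^z ⇒ T^z a natural transformation. -/

import Mathlib

open CategoryTheory MonoidalCategory

universe v u

variable (G : Type*) [Monoid G] [PartialOrder G] [MulLeftMono G] [MulRightMono G]
variable (C : Type u) [Category.{v} C]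

/-- A pomonoid-graded monad on a category `C`, graded by the pomonoid `G`
(a monoid with a partial order for which multiplication is monotone in both arguments). -/
structure GradedMonad where
  /-- the graded family of endofunctors -/
  T : G → C ⥤ C
  /-- the unit -/
  η : 𝟭 C ⟶ T 1
  /-- the graded multiplication; `(μ a b).app X : T^a (T^b X) ⟶ T^{a*b} X` -/
  μ : ∀ a b : G, T b ⋙ T a ⟶ T (a * b)
  /-- the order natural transformations `T^{a ≤ a'}` -/
  ord : ∀ {a a' : G}, a ≤ a' → (T a ⟶ T a')
  ord_refl : ∀ a : G, ord (le_refl a) = 𝟙 (T a)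
  ord_trans : ∀ {a a' a'' : G} (h : a ≤ a') (h' : a' ≤ a''), ord h ≫ ord h' = ord (h.trans h')
  left_unit : ∀ (a : G) (X : C),
    η.app ((T a).obj X) ≫ (μ 1 a).app X = eqToHom (by rw [one_mul]; rfl)
  right_unit : ∀ (a : G) (X : C),
    (T a).map (η.app X) ≫ (μ a 1).app X = eqToHom (by rw [mul_one]; rfl)
  assoc : ∀ (a b c : G) (X : C),
    (T a).map ((μ b c).app X) ≫ (μ a (b * c)).app X =
      (μ a b).app ((T c).obj X) ≫ (μ (a * b) c).app X ≫ eqToHom (by rw [mul_assoc])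
  μ_ord : ∀ {a a' b b' : G} (h : a ≤ a') (h' : b ≤ b') (X : C),
    (μ a b).app X ≫ (ord (mul_le_mul' h h')).app X =
      (T a).map ((ord h').app X) ≫ (ord h).app ((T b').obj X) ≫ (μ a' b').app X

variable [MonoidalCategory C]

/-- A strong pomonoid-graded monad: a graded monad with a graded strength. -/
structure StrongGradedMonad extends GradedMonad G C where
  /-- the graded strength -/
  τ : ∀ (a : G) (X Y : C), X ⊗ (T a).obj Y ⟶ (T a).obj (X ⊗ Y)
  τ_natural : ∀ (a : G) {X X' Y Y' : C} (f : X ⟶ X') (g : Y ⟶ Y'),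
    (f ⊗ₘ (T a).map g) ≫ τ a X' Y' = τ a X Y ≫ (T a).map (f ⊗ₘ g)
  τ_unitor : ∀ (a : G) (X : C),
    τ a (𝟙_ C) X ≫ (T a).map (λ_ X).hom = (λ_ ((T a).obj X)).hom
  τ_assoc : ∀ (a : G) (X Y Z : C),
    (α_ X Y ((T a).obj Z)).hom ≫ (𝟙 X ⊗ₘ τ a Y Z) ≫ τ a X (Y ⊗ Z) =
      τ a (X ⊗ Y) Z ≫ (T a).map (α_ X Y Z).hom
  τ_η : ∀ (X Y : C), (𝟙 X ⊗ₘ η.app Y) ≫ τ 1 X Y = η.app (X ⊗ Y)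
  τ_μ : ∀ (a b : G) (X Y : C),
    (𝟙 X ⊗ₘ (μ a b).app Y) ≫ τ (a * b) X Y =
      τ a X ((T b).obj Y) ≫ (T a).map (τ b X Y) ≫ (μ a b).app (X ⊗ Y)
  τ_ord : ∀ {a a' : G} (h : a ≤ a') (X Y : C),
    (𝟙 X ⊗ₘ (ord h).app Y) ≫ τ a' X Y = τ a X Y ≫ (ord h).app (X ⊗ Y)

variable {G C}

namespace StrongGradedMonad

variable [BraidedCategory C]

/-- The graded costrength `τ'^a_{X,Y} := T^a(γ) ∘ τ^a ∘ γ`. -/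
def costr (M : StrongGradedMonad G C) (a : G) (X Y : C) :
    (M.T a).obj X ⊗ Y ⟶ (M.T a).obj (X ⊗ Y) :=
  (β_ ((M.T a).obj X) Y).hom ≫ M.τ a Y X ≫ (M.T a).map (β_ Y X).hom

/-- A strong graded monad is commutative when the two double-strength maps agree
(for all gradations `a`, `b` for which `a * b = b * a`, so that the equation typechecks;
in particular if the grading pomonoid is commutative this is required for all pairs). -/
def IsCommutative (M : StrongGradedMonad G C) : Prop :=
  ∀ (a b : G) (h : a * b = b * a) (X Y : C),
    M.costr a X ((M.T b).obj Y) ≫ (M.T a).map (M.τ b X Y) ≫ (M.μ a b).app (X ⊗ Y) =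
      M.τ b ((M.T a).obj X) Y ≫ (M.T b).map (M.costr a X Y) ≫ (M.μ b a).app (X ⊗ Y) ≫
        eqToHom (by rw [h])

/-- A graded central cone of `M` at `(z, X)` (where `z` is central in `G`),
with apex `Z` and map `ι : Z ⟶ T^z X`. -/
def CentralCone (M : StrongGradedMonad G C) (z : G) (hz : ∀ b : G, z * b = b * z)
    (X Z : C) (ι : Z ⟶ (M.T z).obj X) : Prop :=
  ∀ (b : G) (Y : C),
    (ι ⊗ₘ 𝟙 ((M.T b).obj Y)) ≫ M.costr z X ((M.T b).obj Y) ≫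
        (M.T z).map (M.τ b X Y) ≫ (M.μ z b).app (X ⊗ Y) =
      (ι ⊗ₘ 𝟙 ((M.T b).obj Y)) ≫ M.τ b ((M.T z).obj X) Y ≫
        (M.T b).map (M.costr z X Y) ≫ (M.μ b z).app (X ⊗ Y) ≫ eqToHom (by rw [hz b])

/-- A terminal graded central cone at `(z, X)`: a graded central cone through which every
graded central cone at `(z, X)` factors uniquely. -/
def IsTerminalCentralCone (M : StrongGradedMonad G C) (z : G) (hz : ∀ b : G, z * b = b * z)
    (X Z : C) (ι : Z ⟶ (M.T z).obj X) : Prop :=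
  M.CentralCone z hz X Z ι ∧
    ∀ (W : C) (f : W ⟶ (M.T z).obj X), M.CentralCone z hz X W f →
      ∃! φ : W ⟶ Z, φ ≫ ι = f

/-- A strong graded monad is centralisable when it has a terminal graded central cone
at `(z, X)` for every central `z` and every object `X`. -/
def Centralisable (M : StrongGradedMonad G C) : Prop :=
  ∀ (z : G) (hz : ∀ b : G, z * b = b * z) (X : C),
    ∃ (Z : C) (ι : Z ⟶ (M.T z).obj X), M.IsTerminalCentralCone z hz X Z ι

end StrongGradedMonad

/-- Every element of the centre of a monoid commutes with every element. -/
def centerComm {G : Type*} [Monoid G] (z : Submonoid.center G) :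
    ∀ b : G, (z : G) * b = b * (z : G) :=
  fun b => (Submonoid.mem_center_iff.mp z.prop b).symm

/-!
Both sides of the graded-centrality equation are composites of a costrength, a strength and a
multiplication, all natural in `X`; hence postcomposing a central cone at `X` with `T^z f` gives a
central cone at `Y`, which factors uniquely through the terminal one. Uniqueness of these
factorisations then forces `Z^z` to preserve identities and composition.
-/

namespace StrongGradedMonad

variable [BraidedCategory C] (M : StrongGradedMonad G C)

def costrStr (a b : G) (X Y : C) :
    (M.T a).obj X ⊗ (M.T b).obj Y ⟶ (M.T (a * b)).obj (X ⊗ Y) :=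
  M.costr a X ((M.T b).obj Y) ≫ (M.T a).map (M.τ b X Y) ≫ (M.μ a b).app (X ⊗ Y)

def strCostr (a b : G) (X Y : C) :
    (M.T a).obj X ⊗ (M.T b).obj Y ⟶ (M.T (b * a)).obj (X ⊗ Y) :=
  M.τ b ((M.T a).obj X) Y ≫ (M.T b).map (M.costr a X Y) ≫ (M.μ b a).app (X ⊗ Y)

theorem centralCone_iff (z : G) (hz : ∀ b : G, z * b = b * z) (X W : C)
    (ι : W ⟶ (M.T z).obj X) :
    M.CentralCone z hz X W ι ↔ ∀ (b : G) (Y : C),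
      (ι ⊗ₘ 𝟙 _) ≫ M.costrStr z b X Y =
        (ι ⊗ₘ 𝟙 _) ≫ M.strCostr z b X Y ≫ eqToHom (by rw [hz b]) := by
  simp only [CentralCone, costrStr, strCostr, Category.assoc]

theorem costr_natural (a : G) {X X' Y Y' : C} (f : X ⟶ X') (g : Y ⟶ Y') :
    ((M.T a).map f ⊗ₘ g) ≫ M.costr a X' Y' = M.costr a X Y ≫ (M.T a).map (f ⊗ₘ g) := by
  simp only [costr]
  rw [BraidedCategory.braiding_naturality_assoc, reassoc_of% (M.τ_natural a g f),
    ← Functor.map_comp, BraidedCategory.braiding_naturality, Functor.map_comp]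
  simp

theorem costrStr_natural (a b : G) {X X' Y Y' : C} (f : X ⟶ X') (g : Y ⟶ Y') :
    ((M.T a).map f ⊗ₘ (M.T b).map g) ≫ M.costrStr a b X' Y' =
      M.costrStr a b X Y ≫ (M.T (a * b)).map (f ⊗ₘ g) := by
  have hμ := (M.μ a b).naturality (f ⊗ₘ g)
  simp only [Functor.comp_map] at hμ
  simp only [costrStr]
  rw [reassoc_of% (M.costr_natural a f ((M.T b).map g)), ← Functor.map_comp_assoc, M.τ_natural,
    Functor.map_comp_assoc, hμ, Category.assoc, Category.assoc]

theorem strCostr_natural (a b : G) {X X' Y Y' : C} (f : X ⟶ X') (g : Y ⟶ Y') :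
    ((M.T a).map f ⊗ₘ (M.T b).map g) ≫ M.strCostr a b X' Y' =
      M.strCostr a b X Y ≫ (M.T (b * a)).map (f ⊗ₘ g) := by
  have hμ := (M.μ b a).naturality (f ⊗ₘ g)
  simp only [Functor.comp_map] at hμ
  simp only [strCostr]
  rw [reassoc_of% (M.τ_natural b ((M.T a).map f) g), ← Functor.map_comp_assoc, M.costr_natural,
    Functor.map_comp_assoc, hμ, Category.assoc, Category.assoc]

variable {M}

theorem CentralCone.comp_map {z : G} {hz : ∀ b : G, z * b = b * z} {X Y W : C}
    {ι : W ⟶ (M.T z).obj X} (hι : M.CentralCone z hz X W ι) (f : X ⟶ Y) :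
    M.CentralCone z hz Y W (ι ≫ (M.T z).map f) := by
  rw [centralCone_iff] at hι ⊢
  intro b Y'
  have hsplit : (ι ≫ (M.T z).map f) ⊗ₘ 𝟙 ((M.T b).obj Y') =
      (ι ⊗ₘ 𝟙 _) ≫ ((M.T z).map f ⊗ₘ (M.T b).map (𝟙 Y')) := by simp
  simp only [hsplit, Category.assoc]
  rw [M.costrStr_natural, reassoc_of% (hι b Y'), reassoc_of% (M.strCostr_natural z b f (𝟙 Y')),
    eqToHom_naturality (fun a => (M.T a).map (f ⊗ₘ 𝟙 Y')) (hz b).symm]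

theorem IsTerminalCentralCone.existsUnique_map {z : G} {hz : ∀ b : G, z * b = b * z}
    {X Y ZX ZY : C} {ιX : ZX ⟶ (M.T z).obj X} {ιY : ZY ⟶ (M.T z).obj Y}
    (hX : M.CentralCone z hz X ZX ιX) (hY : M.IsTerminalCentralCone z hz Y ZY ιY) (f : X ⟶ Y) :
    ∃! φ : ZX ⟶ ZY, φ ≫ ιY = ιX ≫ (M.T z).map f :=
  hY.2 ZX _ (hX.comp_map f)

variable (M)

section centreFunctor

variable (z : G) (hz : ∀ b : G, z * b = b * z) (Zc : C → C) (ι : ∀ X, Zc X ⟶ (M.T z).obj X)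
  (hterm : ∀ X, M.IsTerminalCentralCone z hz X (Zc X) (ι X))

noncomputable def centreMap {X Y : C} (f : X ⟶ Y) : Zc X ⟶ Zc Y :=
  ((hterm Y).existsUnique_map (hterm X).1 f).exists.choose

theorem centreMap_comp_ι {X Y : C} (f : X ⟶ Y) :
    M.centreMap z hz Zc ι hterm f ≫ ι Y = ι X ≫ (M.T z).map f :=
  ((hterm Y).existsUnique_map (hterm X).1 f).exists.choose_spec

theorem centreMap_unique {X Y : C} (f : X ⟶ Y) {φ : Zc X ⟶ Zc Y}
    (hφ : φ ≫ ι Y = ι X ≫ (M.T z).map f) : φ = M.centreMap z hz Zc ι hterm f :=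
  ((hterm Y).existsUnique_map (hterm X).1 f).unique hφ (M.centreMap_comp_ι z hz Zc ι hterm f)

noncomputable def centreFunctor : C ⥤ C where
  obj := Zc
  map := M.centreMap z hz Zc ι hterm
  map_id X := (M.centreMap_unique z hz Zc ι hterm (𝟙 X) (by simp)).symm
  map_comp f g := (M.centreMap_unique z hz Zc ι hterm (f ≫ g) (by
    rw [Category.assoc, centreMap_comp_ι, reassoc_of% (M.centreMap_comp_ι z hz Zc ι hterm f),
      Functor.map_comp])).symm

end centreFunctor

end StrongGradedMonad

open StrongGradedMonad in
/-- For a centralisable strong graded monad with terminal graded central cones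
`(Zc z X, ι z X)`, every `f : X ⟶ Y` induces a unique `Z^z f` commuting with the cone maps,
and this assignment is functorial (making `ι^z` natural). -/
theorem centre_functorial
    {G : Type*} [Monoid G] [PartialOrder G] [MulLeftMono G] [MulRightMono G]
    {C : Type u} [Category.{v} C] [MonoidalCategory C] [SymmetricCategory C]
    (M : StrongGradedMonad G C)
    (Zc : Submonoid.center G → C → C)
    (ι : ∀ (z : Submonoid.center G) (X : C), Zc z X ⟶ (M.T (z : G)).obj X)
    (hterm : ∀ (z : Submonoid.center G) (X : C),
      M.IsTerminalCentralCone (z : G) (centerComm z) X (Zc z X) (ι z X))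
    (z : Submonoid.center G) :
    (∀ {X Y : C} (f : X ⟶ Y),
      ∃! φ : Zc z X ⟶ Zc z Y, φ ≫ ι z Y = ι z X ≫ (M.T (z : G)).map f) ∧
    ∃ Fmap : ∀ (X Y : C), (X ⟶ Y) → (Zc z X ⟶ Zc z Y),
      (∀ (X Y : C) (f : X ⟶ Y), Fmap X Y f ≫ ι z Y = ι z X ≫ (M.T (z : G)).map f) ∧
      (∀ X : C, Fmap X X (𝟙 X) = 𝟙 (Zc z X)) ∧
      (∀ (X Y W : C) (f : X ⟶ Y) (g : Y ⟶ W), Fmap X W (f ≫ g) = Fmap X Y f ≫ Fmap Y W g) := by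
  let F := M.centreFunctor z (centerComm z) (Zc z) (ι z) (hterm z)
  exact ⟨fun f => (hterm z _).existsUnique_map (hterm z _).1 f, fun _ _ f => F.map f,
    fun _ _ f => M.centreMap_comp_ι z (centerComm z) (Zc z) (ι z) (hterm z) f,
    F.map_id, fun _ _ _ => F.map_comp⟩
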